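/- arXiv:2310.04340 — 3 statements merged into one kernel-verified Lean document; each statement's English description precedes it below -/
import Mathlib

section
/- For every symmetric matrix Q ∈ S^n and every ρ ∈ {1,…,n}, the RLT relaxation of the sparse StQP is exact, i.e., ℓ^{R1}_ρ(Q) = ℓ_ρ(Q), if and only if ρ = 1 or min_{1≤i≤j≤n} Q_{ij} = min_{1≤k≤n} Q_{kk}. -/
open Matrix BigOperators

noncomputable section

def simplexF (n : ℕ) : Set (Fin n → ℝ) :=
  {x | (∑ i, x i) = 1 ∧ ∀ i, 0 ≤ x i}

def sparsity {n : ℕ} (x : Fin n → ℝ) : ℕ :=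
  Set.ncard {i | x i ≠ 0}

def sparseF (n ρ : ℕ) : Set (Fin n → ℝ) :=
  {x | x ∈ simplexF n ∧ sparsity x ≤ ρ}

def quadForm {n : ℕ} (Q : Matrix (Fin n) (Fin n) ℝ) (x : Fin n → ℝ) : ℝ :=
  x ⬝ᵥ Q.mulVec x

def ell {n : ℕ} (Q : Matrix (Fin n) (Fin n) ℝ) : ℝ :=
  sInf (quadForm Q '' simplexF n)

def ellSparse {n : ℕ} (Q : Matrix (Fin n) (Fin n) ℝ) (ρ : ℕ) : ℝ :=
  sInf (quadForm Q '' sparseF n ρ)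

def ip {n : ℕ} (Q X : Matrix (Fin n) (Fin n) ℝ) : ℝ :=
  ∑ i, ∑ j, Q i j * X i j

def R1Feasible {n : ℕ} (ρ : ℕ) (x u : Fin n → ℝ)
    (X U R : Matrix (Fin n) (Fin n) ℝ) : Prop :=
  X.IsSymm ∧ U.IsSymm ∧
  (∑ i, x i) = 1 ∧
  (∑ i, u i) = (ρ : ℝ) ∧
  (∀ i, x i ≤ u i) ∧
  (∀ i, 0 ≤ x i) ∧
  (∀ i, U i i = u i) ∧
  (∀ i, (∑ j, X i j) = x i) ∧
  (∀ j, (∑ i, R i j) = u j) ∧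
  (∀ i, (∑ j, R i j) = (ρ : ℝ) * x i) ∧
  (∀ i, (∑ j, U i j) = (ρ : ℝ) * u i) ∧
  (∀ i j, 0 ≤ X i j - R j i - R i j + U i j) ∧
  (∀ i j, X i j - R j i ≤ 0) ∧
  (∀ i j, R i j - U i j ≤ 0) ∧
  (∀ i j, 0 ≤ X i j) ∧ (∀ i j, 0 ≤ R i j) ∧ (∀ i j, 0 ≤ U i j)

def FR1proj (n ρ : ℕ) : Set ((Fin n → ℝ) × Matrix (Fin n) (Fin n) ℝ) :=
  {p | ∃ u U R, R1Feasible ρ p.1 u p.2 U R}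

def FR1 (n : ℕ) : Set ((Fin n → ℝ) × Matrix (Fin n) (Fin n) ℝ) :=
  {p | p.2.IsSymm ∧ (∑ i, p.1 i) = 1 ∧ (∀ i, (∑ j, p.2 i j) = p.1 i) ∧
    (∀ i, 0 ≤ p.1 i) ∧ (∀ i j, 0 ≤ p.2 i j)}

def ellR1 {n : ℕ} (Q : Matrix (Fin n) (Fin n) ℝ) (ρ : ℕ) : ℝ :=
  sInf ((fun p => ip Q p.2) '' FR1proj n ρ)

/-! Let `m` be the least entry of `Q` and `d` its least diagonal entry. Lifting `x ∈ F_ρ` to the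
rank-one tuple `(x, u, x xᵀ, u uᵀ, x uᵀ)`, with `u` the indicator of a `ρ`-element superset of the
support of `x`, shows `m ≤ ℓ^{R1}_ρ ≤ ℓ_ρ ≤ d`, the last bound coming from the vertices of the
simplex. This settles the case `m = d`. For `ρ = 1` the constraints `Ue = u = diag U` force `U`,
then `R` and `X`, to be diagonal, so `ℓ^{R1}_1 ≥ d`. Conversely, if `ρ ≥ 2` and `m = Q a b < d`
then `a ≠ b`, and the edge point `x = (e_a + e_b)/2`, `X = (e_a e_bᵀ + e_b e_aᵀ)/2` is
`R1(ρ)`-feasible with value `m`, while on the simplex `xᵀQx ≥ m + (d - m)‖x‖² ≥ m + (d - m)/n`. -/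

lemma quadForm_eq_ip {n : ℕ} (Q : Matrix (Fin n) (Fin n) ℝ) (x : Fin n → ℝ) :
    quadForm Q x = ip Q (vecMulVec x x) := by
  simp only [quadForm, ip, dotProduct, mulVec, vecMulVec_apply, Finset.mul_sum]
  exact Finset.sum_congr rfl fun i _ => Finset.sum_congr rfl fun j _ => by ring

lemma sum_vecMulVec_apply_right {ι κ α : Type*} [Fintype κ] [NonUnitalNonAssocSemiring α]
    (x : ι → α) (y : κ → α) (i : ι) :
    ∑ j, vecMulVec x y i j = x i * ∑ j, y j := by
  simp only [vecMulVec_apply, Finset.mul_sum]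

lemma sum_vecMulVec_apply_left {ι κ α : Type*} [Fintype ι] [NonUnitalNonAssocSemiring α]
    (x : ι → α) (y : κ → α) (j : κ) :
    ∑ i, vecMulVec x y i j = (∑ i, x i) * y j := by
  simp only [vecMulVec_apply, Finset.sum_mul]

lemma le_ip_of_le_on_support {n : ℕ} {Q X : Matrix (Fin n) (Fin n) ℝ} {c : ℝ}
    (hX : ∀ i j, 0 ≤ X i j) (hX1 : ∑ i, ∑ j, X i j = 1)
    (hc : ∀ i j, X i j ≠ 0 → c ≤ Q i j) : c ≤ ip Q X := by
  calc c = ∑ i, ∑ j, c * X i j := by simp only [← Finset.mul_sum, hX1, mul_one]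
    _ ≤ ip Q X := by
      refine Finset.sum_le_sum fun i _ => Finset.sum_le_sum fun j _ => ?_
      by_cases h : X i j = 0
      · simp [h]
      · exact mul_le_mul_of_nonneg_right (hc i j h) (hX i j)

lemma add_mul_trace_le_ip {n : ℕ} {Q X : Matrix (Fin n) (Fin n) ℝ} {c d : ℝ}
    (hX : ∀ i j, 0 ≤ X i j) (hX1 : ∑ i, ∑ j, X i j = 1)
    (hc : ∀ i j, c ≤ Q i j) (hd : ∀ k, d ≤ Q k k) :
    c + (d - c) * ∑ i, X i i ≤ ip Q X := by
  have hdiag : ∀ i, (d - c) * X i i ≤ ∑ j, (Q i j - c) * X i j := fun i =>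
    calc (d - c) * X i i ≤ (Q i i - c) * X i i :=
          mul_le_mul_of_nonneg_right (by linarith [hd i]) (hX i i)
      _ ≤ ∑ j, (Q i j - c) * X i j :=
          Finset.single_le_sum (f := fun j => (Q i j - c) * X i j)
            (fun j _ => mul_nonneg (by linarith [hc i j]) (hX i j)) (Finset.mem_univ i)
  have hsplit : ip Q X = c + ∑ i, ∑ j, (Q i j - c) * X i j := by
    simp only [ip, sub_mul, Finset.sum_sub_distrib, ← Finset.mul_sum, hX1]
    ring
  rw [hsplit, Finset.mul_sum]
  linarith [Finset.sum_le_sum fun i (_ : i ∈ Finset.univ) => hdiag i]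

lemma one_le_card_mul_sum_sq {ι : Type*} [Fintype ι] {x : ι → ℝ} (hx : ∑ i, x i = 1) :
    1 ≤ (Fintype.card ι : ℝ) * ∑ i, x i ^ 2 := by
  simpa [hx] using sq_sum_le_card_mul_sum_sq (s := Finset.univ) (f := x)

lemma sum_sum_vecMulVec_self {n : ℕ} {x : Fin n → ℝ} (hx : ∑ i, x i = 1) :
    ∑ i, ∑ j, vecMulVec x x i j = 1 := by
  simp [sum_vecMulVec_apply_right, hx]

lemma le_quadForm_of_le {n : ℕ} {Q : Matrix (Fin n) (Fin n) ℝ} {c : ℝ}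
    (hc : ∀ i j, c ≤ Q i j) {x : Fin n → ℝ} (hx : x ∈ simplexF n) : c ≤ quadForm Q x :=
  quadForm_eq_ip Q x ▸ le_ip_of_le_on_support (fun i j => mul_nonneg (hx.2 i) (hx.2 j))
    (sum_sum_vecMulVec_self hx.1) fun i j _ => hc i j

lemma add_div_card_le_quadForm {n : ℕ} {Q : Matrix (Fin n) (Fin n) ℝ} {c d : ℝ}
    (hc : ∀ i j, c ≤ Q i j) (hd : ∀ k, d ≤ Q k k) (hcd : c ≤ d)
    {x : Fin n → ℝ} (hx : x ∈ simplexF n) :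
    c + (d - c) / n ≤ quadForm Q x := by
  obtain ⟨hx1, hx0⟩ := hx
  have htrace := add_mul_trace_le_ip (X := vecMulVec x x) (fun i j => mul_nonneg (hx0 i) (hx0 j))
    (sum_sum_vecMulVec_self hx1) hc hd
  have htr : ∑ i, vecMulVec x x i i = ∑ i, x i ^ 2 := by simp only [vecMulVec_apply, sq]
  have hcs : 1 ≤ (n : ℝ) * ∑ i, x i ^ 2 := by simpa using one_le_card_mul_sum_sq hx1
  have hn : (0 : ℝ) < n := by
    rcases Nat.eq_zero_or_pos n with rfl | hn
    · norm_num at hcs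
    · exact_mod_cast hn
  rw [htr] at htrace
  rw [quadForm_eq_ip]
  have hsq : (d - c) / n ≤ (d - c) * ∑ i, x i ^ 2 := by
    rw [div_le_iff₀ hn, mul_assoc]
    nlinarith
  linarith

lemma R1Feasible.le_ip {n ρ : ℕ} {x u : Fin n → ℝ} {X U R Q : Matrix (Fin n) (Fin n) ℝ}
    {c : ℝ} (h : R1Feasible ρ x u X U R) (hc : ∀ i j, c ≤ Q i j) : c ≤ ip Q X := by
  obtain ⟨-, -, hx1, -, -, -, -, hXrow, -, -, -, -, -, -, hX0, -, -⟩ := h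
  exact le_ip_of_le_on_support hX0 (by simp only [hXrow, hx1]) fun i j _ => hc i j

lemma R1Feasible.apply_eq_zero_of_ne {n : ℕ} {x u : Fin n → ℝ}
    {X U R : Matrix (Fin n) (Fin n) ℝ} (h : R1Feasible 1 x u X U R) {i j : Fin n} (hij : i ≠ j) :
    X i j = 0 := by
  obtain ⟨-, -, -, -, -, -, hUd, -, -, -, hUrow, -, hXR, hRU, hX0, -, hU0⟩ := h
  have hUoff : ∑ k ∈ Finset.univ.erase j, U j k = 0 := by
    have := hUrow j
    rw [← Finset.add_sum_erase _ _ (Finset.mem_univ j), hUd j, Nat.cast_one, one_mul] at this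
    linarith
  have hUji : U j i = 0 := (Finset.sum_eq_zero_iff_of_nonneg fun k _ => hU0 j k).1 hUoff i
    (Finset.mem_erase.2 ⟨hij, Finset.mem_univ i⟩)
  linarith [hXR i j, hRU j i, hX0 i j]

lemma R1Feasible.le_ip_of_le_diag {n : ℕ} {x u : Fin n → ℝ} {X U R Q : Matrix (Fin n) (Fin n) ℝ}
    {d : ℝ} (h : R1Feasible 1 x u X U R) (hd : ∀ k, d ≤ Q k k) : d ≤ ip Q X := by
  obtain ⟨-, -, hx1, -, -, -, -, hXrow, -, -, -, -, -, -, hX0, -, -⟩ := id h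
  refine le_ip_of_le_on_support hX0 (by simp only [hXrow, hx1]) fun i j hX => ?_
  obtain rfl : i = j := by_contra fun hij => hX (h.apply_eq_zero_of_ne hij)
  exact hd i

lemma R1Feasible_vecMulVec {n ρ : ℕ} {x u : Fin n → ℝ} (hx : x ∈ simplexF n)
    (hu : ∀ i, u i * u i = u i) (hxu : ∀ i, x i ≤ u i) (hu1 : ∑ i, u i = ρ) :
    R1Feasible ρ x u (vecMulVec x x) (vecMulVec u u) (vecMulVec x u) := by
  obtain ⟨hx1, hx0⟩ := hx
  have hu0 : ∀ i, 0 ≤ u i := fun i => (hx0 i).trans (hxu i)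
  refine ⟨?_, ?_, hx1, hu1, hxu, hx0, hu, fun i => ?_, fun j => ?_, fun i => ?_, fun i => ?_,
    fun i j => ?_, fun i j => ?_, fun i j => ?_, fun i j => ?_, fun i j => ?_, fun i j => ?_⟩
  · exact transpose_vecMulVec x x
  · exact transpose_vecMulVec u u
  · rw [sum_vecMulVec_apply_right, hx1, mul_one]
  · rw [sum_vecMulVec_apply_left, hx1, one_mul]
  · rw [sum_vecMulVec_apply_right, hu1, mul_comm]
  · rw [sum_vecMulVec_apply_right, hu1, mul_comm]
  · simp only [vecMulVec_apply]
    nlinarith [mul_nonneg (sub_nonneg.2 (hxu i)) (sub_nonneg.2 (hxu j))]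
  · simp only [vecMulVec_apply]
    nlinarith [mul_le_mul_of_nonneg_left (hxu i) (hx0 j)]
  · simp only [vecMulVec_apply]
    nlinarith [mul_le_mul_of_nonneg_right (hxu i) (hu0 j)]
  · exact mul_nonneg (hx0 i) (hx0 j)
  · exact mul_nonneg (hx0 i) (hu0 j)
  · exact mul_nonneg (hu0 i) (hu0 j)

lemma le_one_of_mem_simplexF {n : ℕ} {x : Fin n → ℝ} (hx : x ∈ simplexF n) (i : Fin n) :
    x i ≤ 1 :=
  hx.1 ▸ Finset.single_le_sum (fun j _ => hx.2 j) (Finset.mem_univ i)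

lemma mem_FR1proj_of_mem_sparseF {n ρ : ℕ} (hρn : ρ ≤ n) {x : Fin n → ℝ}
    (hx : x ∈ sparseF n ρ) : (x, vecMulVec x x) ∈ FR1proj n ρ := by
  obtain ⟨hxF, hxρ⟩ := hx
  have hsupp : (Finset.univ.filter fun i => x i ≠ 0).card ≤ ρ := by
    rwa [sparsity, ← Finset.coe_filter_univ, Set.ncard_coe_finset] at hxρ
  obtain ⟨T, hT, hTρ⟩ := Finset.exists_superset_card_eq hsupp (by simpa using hρn)
  have hxT : ∀ i ∉ T, x i = 0 := fun i hi => by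
    by_contra hxi
    exact hi (hT (Finset.mem_filter.2 ⟨Finset.mem_univ i, hxi⟩))
  refine ⟨fun i => if i ∈ T then 1 else 0, _, _, R1Feasible_vecMulVec hxF (fun i => ?_)
    (fun i => ?_) ?_⟩
  · split_ifs <;> norm_num
  · split_ifs with hi
    · exact le_one_of_mem_simplexF hxF i
    · exact (hxT i hi).le
  · simp [hTρ]

lemma R1Feasible_of_adjacency {n ρ : ℕ} (hρ : 2 ≤ ρ) {s : Fin n → ℝ}
    {E : Matrix (Fin n) (Fin n) ℝ} (hs0 : ∀ i, 0 ≤ s i) (hs : ∑ i, s i = 2) (hE : E.IsSymm)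
    (hE0 : ∀ i j, 0 ≤ E i j) (hEdiag : ∀ i, E i i = 0) (hErow : ∀ i, ∑ j, E i j = s i) :
    R1Feasible ρ ((1 / 2 : ℝ) • s) ((ρ / 2 : ℝ) • s) ((1 / 2 : ℝ) • E)
      ((ρ / 2 : ℝ) • diagonal s + (ρ * (ρ - 1) / 2 : ℝ) • E)
      ((ρ / 4 : ℝ) • (diagonal s + E)) := by
  have hr : (2 : ℝ) ≤ ρ := by exact_mod_cast hρ
  have hD0 : ∀ i j, 0 ≤ diagonal s i j := fun i j => by
    rw [diagonal_apply]; split_ifs <;> simp [hs0]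
  have hDsymm : ∀ i j, diagonal s j i = diagonal s i j := (isSymm_diagonal s).apply
  have hEsymm : ∀ i j, E j i = E i j := fun i j => hE.apply i j
  have hDrow : ∀ i, ∑ j, diagonal s i j = s i := fun i => by simp [diagonal_apply]
  have hDcol : ∀ j, ∑ i, diagonal s i j = s j := fun j => by simp [diagonal_apply]
  have hEcol : ∀ j, ∑ i, E i j = s j := fun j => by simp only [← hErow j, hEsymm j]
  refine ⟨?_, ?_, ?_, ?_, fun i => ?_, fun i => ?_, fun i => ?_, fun i => ?_, fun j => ?_,
    fun i => ?_, fun i => ?_, fun i j => ?_, fun i j => ?_, fun i j => ?_, fun i j => ?_,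
    fun i j => ?_, fun i j => ?_⟩
  -- each constraint becomes a combination of entries of `diagonal s` and `E` whose coefficients
  -- have the right sign as soon as `ρ ≥ 2`
  all_goals try simp only [IsSymm, transpose_smul, transpose_add, diagonal_transpose, hE.eq,
    Pi.smul_apply, Matrix.smul_apply, Matrix.add_apply, smul_eq_mul, Finset.sum_add_distrib,
    ← Finset.mul_sum, hDrow, hErow, hDcol, hEcol, hs, hEdiag, diagonal_apply_eq]
  all_goals try ring_nf
  all_goals first
    | nlinarith [hs0 i]
    | nlinarith [hD0 i j, hE0 i j, hDsymm i j, hEsymm i j,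
        mul_nonneg (mul_nonneg (by positivity : (0:ℝ) ≤ ρ) (sub_nonneg.2 hr)) (hE0 i j),
        mul_nonneg (by positivity : (0:ℝ) ≤ ρ) (hE0 i j),
        mul_nonneg (by positivity : (0:ℝ) ≤ ρ) (hD0 i j)]

lemma exists_mem_FR1proj_ip_eq {n ρ : ℕ} (hρ : 2 ≤ ρ) {Q : Matrix (Fin n) (Fin n) ℝ}
    (hQ : Q.IsSymm) {a b : Fin n} (hab : a ≠ b) : ∃ p ∈ FR1proj n ρ, ip Q p.2 = Q a b := by
  set ea : Fin n → ℝ := Pi.single a 1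
  set eb : Fin n → ℝ := Pi.single b 1
  have hea : ∀ i, 0 ≤ ea i := fun i => by simp only [ea, Pi.single_apply]; split_ifs <;> norm_num
  have heb : ∀ i, 0 ≤ eb i := fun i => by simp only [eb, Pi.single_apply]; split_ifs <;> norm_num
  have hab0 : ∀ i, ea i * eb i = 0 := fun i => by
    simp only [ea, eb, Pi.single_apply]; split_ifs <;> simp_all
  have hsum : ∀ k : Fin n, ∑ i, (Pi.single k 1 : Fin n → ℝ) i = 1 := fun k => by simp
  set E := vecMulVec ea eb + vecMulVec eb ea
  have hE : E.IsSymm := by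
    simp only [E, IsSymm, transpose_add, transpose_vecMulVec, add_comm]
  refine ⟨((1 / 2 : ℝ) • (ea + eb), (1 / 2 : ℝ) • E),
    ⟨_, _, _, R1Feasible_of_adjacency hρ (fun i => add_nonneg (hea i) (heb i)) ?_ hE ?_ ?_ ?_⟩, ?_⟩
  · norm_num [Finset.sum_add_distrib, ea, eb]
  · intro i j
    simp only [E, Matrix.add_apply, vecMulVec_apply]
    exact add_nonneg (mul_nonneg (hea i) (heb j)) (mul_nonneg (heb i) (hea j))
  · intro i; simp only [E, Matrix.add_apply, vecMulVec_apply, hab0, mul_comm (eb i), add_zero]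
  · intro i
    simp [E, Finset.sum_add_distrib, sum_vecMulVec_apply_right, ea, eb, hsum]
  · simp [ip, E, Matrix.add_apply, vecMulVec_apply, ea, eb, Pi.single_apply, mul_add,
      Finset.sum_add_distrib, hQ.apply a b]
    ring

lemma single_mem_sparseF {n ρ : ℕ} (hρ : 1 ≤ ρ) (k : Fin n) :
    (Pi.single k 1 : Fin n → ℝ) ∈ sparseF n ρ := by
  refine ⟨⟨by simp, fun i => ?_⟩, ?_⟩
  · rw [Pi.single_apply]; split_ifs <;> norm_num
  · have : {i | (Pi.single k 1 : Fin n → ℝ) i ≠ 0} = {k} := by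
      ext i; simp [Pi.single_apply]
    rwa [sparsity, this, Set.ncard_singleton]

lemma quadForm_single {n : ℕ} (Q : Matrix (Fin n) (Fin n) ℝ) (k : Fin n) :
    quadForm Q (Pi.single k 1) = Q k k := by
  simp [quadForm]

lemma bddBelow_ip_FR1proj {n ρ : ℕ} {Q : Matrix (Fin n) (Fin n) ℝ} {c : ℝ}
    (hc : ∀ i j, c ≤ Q i j) : BddBelow ((fun p => ip Q p.2) '' FR1proj n ρ) :=
  ⟨c, Set.forall_mem_image.2 fun _ ⟨_, _, _, hp⟩ => hp.le_ip hc⟩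

lemma bddBelow_quadForm_sparseF {n ρ : ℕ} {Q : Matrix (Fin n) (Fin n) ℝ} {c : ℝ}
    (hc : ∀ i j, c ≤ Q i j) : BddBelow (quadForm Q '' sparseF n ρ) :=
  ⟨c, Set.forall_mem_image.2 fun _ hx => le_quadForm_of_le hc hx.1⟩

lemma le_ellR1 {n ρ : ℕ} {Q : Matrix (Fin n) (Fin n) ℝ} {c : ℝ} (hne : (FR1proj n ρ).Nonempty)
    (h : ∀ x u X U R, R1Feasible ρ x u X U R → c ≤ ip Q X) : c ≤ ellR1 Q ρ :=
  le_csInf (hne.image _) (Set.forall_mem_image.2 fun _ ⟨_, _, _, hp⟩ => h _ _ _ _ _ hp)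

lemma add_div_card_le_ellSparse {n ρ : ℕ} {Q : Matrix (Fin n) (Fin n) ℝ} {c d : ℝ}
    (hc : ∀ i j, c ≤ Q i j) (hd : ∀ k, d ≤ Q k k) (hcd : c ≤ d) (hne : (sparseF n ρ).Nonempty) :
    c + (d - c) / n ≤ ellSparse Q ρ :=
  le_csInf (hne.image _) <| Set.forall_mem_image.2 fun _ hx =>
    add_div_card_le_quadForm hc hd hcd hx.1

lemma ellR1_le_ellSparse {n ρ : ℕ} {Q : Matrix (Fin n) (Fin n) ℝ} {c : ℝ}
    (hc : ∀ i j, c ≤ Q i j) (hρn : ρ ≤ n) (hne : (sparseF n ρ).Nonempty) :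
    ellR1 Q ρ ≤ ellSparse Q ρ :=
  csInf_le_csInf (bddBelow_ip_FR1proj hc) (hne.image _) <| Set.image_subset_iff.2 fun x hx =>
    ⟨_, mem_FR1proj_of_mem_sparseF hρn hx, (quadForm_eq_ip Q x).symm⟩

lemma inf'_le_of_isSymm {n : ℕ} {Q : Matrix (Fin n) (Fin n) ℝ} (hQ : Q.IsSymm)
    (h : (Finset.univ.filter fun p : Fin n × Fin n => p.1 ≤ p.2).Nonempty) (i j : Fin n) :
    (Finset.univ.filter fun p : Fin n × Fin n => p.1 ≤ p.2).inf' h (fun p => Q p.1 p.2) ≤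
      Q i j := by
  rcases le_total i j with hij | hji
  · exact Finset.inf'_le (fun p : Fin n × Fin n => Q p.1 p.2)
      (Finset.mem_filter.2 ⟨Finset.mem_univ (i, j), hij⟩)
  · exact hQ.apply i j ▸ Finset.inf'_le (fun p : Fin n × Fin n => Q p.1 p.2)
      (Finset.mem_filter.2 ⟨Finset.mem_univ (j, i), hji⟩)

theorem stmt6 {n : ℕ} (hn : 0 < n) (Q : Matrix (Fin n) (Fin n) ℝ) (hQ : Q.IsSymm)
    (ρ : ℕ) (h1 : 1 ≤ ρ) (h2 : ρ ≤ n) :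
    ellR1 Q ρ = ellSparse Q ρ ↔
      ρ = 1 ∨
        ((Finset.univ.filter fun p : Fin n × Fin n => p.1 ≤ p.2).inf'
        (Finset.filter_nonempty_iff.mpr ⟨(⟨0, hn⟩, ⟨0, hn⟩), Finset.mem_univ _, le_rfl⟩)
        (fun p => Q p.1 p.2)) =
          (Finset.univ.inf' (Finset.univ_nonempty_iff.mpr ⟨⟨0, hn⟩⟩) fun k => Q k k) := by
  set m := (Finset.univ.filter fun p : Fin n × Fin n => p.1 ≤ p.2).inf'
    (Finset.filter_nonempty_iff.mpr ⟨(⟨0, hn⟩, ⟨0, hn⟩), Finset.mem_univ _, le_rfl⟩)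
    (fun p => Q p.1 p.2)
  set d := Finset.univ.inf' (Finset.univ_nonempty_iff.mpr ⟨⟨0, hn⟩⟩) fun k => Q k k
  have hmQ : ∀ i j, m ≤ Q i j := inf'_le_of_isSymm hQ _
  have hdQ : ∀ k, d ≤ Q k k := fun k => Finset.inf'_le _ (Finset.mem_univ k)
  obtain ⟨k, -, hk⟩ : ∃ k ∈ Finset.univ, d = Q k k := Finset.exists_mem_eq_inf' _ _
  have hk_mem := single_mem_sparseF h1 k
  have hR1_le_sparse : ellR1 Q ρ ≤ ellSparse Q ρ := ellR1_le_ellSparse hmQ h2 ⟨_, hk_mem⟩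
  have hsparse_le_d : ellSparse Q ρ ≤ d :=
    hk ▸ csInf_le (bddBelow_quadForm_sparseF hmQ) ⟨_, hk_mem, quadForm_single Q k⟩
  have hR1_ne : (FR1proj n ρ).Nonempty := ⟨_, mem_FR1proj_of_mem_sparseF h2 hk_mem⟩
  constructor
  · intro heq
    by_contra! ⟨hρ1, hmd⟩
    have hmd' : m < d := lt_of_le_of_ne (Finset.le_inf' _ _ fun k _ => hmQ k k) hmd
    obtain ⟨⟨a, b⟩, -, hab⟩ : ∃ p ∈ Finset.univ.filter (fun p : Fin n × Fin n => p.1 ≤ p.2),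
        m = Q p.1 p.2 := Finset.exists_mem_eq_inf' _ _
    have hne : a ≠ b := by
      rintro rfl
      exact hmd'.not_ge (hab ▸ hdQ a)
    obtain ⟨p, hp, hpQ⟩ := exists_mem_FR1proj_ip_eq (ρ := ρ) (by omega) hQ hne
    have hR1_le_m : ellR1 Q ρ ≤ m := hab ▸ hpQ ▸ csInf_le (bddBelow_ip_FR1proj hmQ) ⟨p, hp, rfl⟩
    have hgap := add_div_card_le_ellSparse hmQ hdQ hmd'.le ⟨_, hk_mem⟩
    have hpos : 0 < (d - m) / n := div_pos (by linarith) (by exact_mod_cast hn)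
    linarith
  · rintro (rfl | hmd)
    · linarith [le_ellR1 (c := d) hR1_ne fun _ _ _ _ _ hp => hp.le_ip_of_le_diag hdQ]
    · linarith [le_ellR1 (c := m) hR1_ne fun _ _ _ _ _ hp => hp.le_ip hmQ]

end
end

section
/- Let Q = vvᵀ for some v ∈ ℝ^n. If v ≥ 0, or −v ≥ 0, or v_i = 0 for some i ∈ {1,…,n}, then ℓ^{R2}_ρ(Q) = ℓ_ρ(Q) for each ρ ∈ {1,…,n}. Otherwise, ℓ^{R2}_1(Q) < ℓ_1(Q) and ℓ^{R2}_ρ(Q) = ℓ_ρ(Q) for each ρ ∈ {2,…,n}. -/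
/-!
For `Q = v vᵀ` everything depends on the scalar `vᵀx` only. The relaxation is exactly as strong
as the minimum `ℓ(Q)` of `(vᵀx)²` over the whole simplex: the Schur complement of the top-left
entry gives `X ⪰ x xᵀ`, hence `⟨Q, X⟩ ≥ (vᵀx)²`; conversely every `x` in the simplex lifts to
`(x, x xᵀ)` by choosing `x ≤ u ≤ 1` with `eᵀu = ρ` and `U = u uᵀ + Diag(u (1 - u))`.
On the simplex `vᵀx` sweeps out `[min v, max v]`, and every value in it is already taken at a point
with two nonzero entries, so `ℓ_ρ = ℓ` for `ρ ≥ 2`. The vertices only give the values `v i`, and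
`min v_i² = ℓ` exactly when `0` is not strictly inside the range of `v`; otherwise
`ℓ = 0 < min v_i² = ℓ_1`.
-/

open Matrix BigOperators

noncomputable section

def bigMat {n : ℕ} (x u : Fin n → ℝ) (X U R : Matrix (Fin n) (Fin n) ℝ) :
    Matrix (Unit ⊕ (Fin n ⊕ Fin n)) (Unit ⊕ (Fin n ⊕ Fin n)) ℝ :=
  Matrix.fromBlocks (Matrix.of fun _ _ => (1 : ℝ))
    (Matrix.of fun (_ : Unit) j => Sum.elim x u j)
    (Matrix.of fun i (_ : Unit) => Sum.elim x u i)
    (Matrix.fromBlocks X R Rᵀ U)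

def R2Feasible {n : ℕ} (ρ : ℕ) (x u : Fin n → ℝ)
    (X U R : Matrix (Fin n) (Fin n) ℝ) : Prop :=
  X.IsSymm ∧ U.IsSymm ∧
  (∑ i, x i) = 1 ∧ (∑ i, u i) = (ρ : ℝ) ∧
  (∀ i, U i i = u i) ∧
  (∀ i, 0 ≤ x i) ∧ (∀ i, x i ≤ u i) ∧
  (bigMat x u X U R).PosSemidef

def FR2proj (n ρ : ℕ) : Set ((Fin n → ℝ) × Matrix (Fin n) (Fin n) ℝ) :=
  {p | ∃ u U R, R2Feasible ρ p.1 u p.2 U R}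

def ellR2 {n : ℕ} (Q : Matrix (Fin n) (Fin n) ℝ) (ρ : ℕ) : EReal :=
  sInf ((fun p => ((ip Q p.2 : ℝ) : EReal)) '' FR2proj n ρ)

lemma single_mem_sparseF_one {n : ℕ} (i : Fin n) : Pi.single i 1 ∈ sparseF n 1 := by
  refine ⟨⟨by simp, fun j => ?_⟩, ?_⟩
  · rcases eq_or_ne j i with rfl | h <;> simp [*]
  · refine (Set.ncard_le_ncard fun j hj => ?_).trans (Set.ncard_singleton i).le
    by_contra h
    exact hj (Pi.single_eq_of_ne h 1)

lemma sparseF_subset_simplexF (n ρ : ℕ) : sparseF n ρ ⊆ simplexF n := fun _ hx => hx.1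

lemma sparseF_mono {n ρ ρ' : ℕ} (h : ρ ≤ ρ') : sparseF n ρ ⊆ sparseF n ρ' :=
  fun _ hx => ⟨hx.1, hx.2.trans h⟩

lemma simplexF_nonempty {n : ℕ} (hn : 0 < n) : (simplexF n).Nonempty :=
  ⟨_, sparseF_subset_simplexF n 1 (single_mem_sparseF_one ⟨0, hn⟩)⟩

lemma quadForm_vecMulVec_self {n : ℕ} (v x : Fin n → ℝ) :
    quadForm (vecMulVec v v) x = (v ⬝ᵥ x) ^ 2 := by
  simp [quadForm, vecMulVec_mulVec, dotProduct_comm x v, sq]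

lemma ip_comm {n : ℕ} (Q X : Matrix (Fin n) (Fin n) ℝ) : ip Q X = ip X Q := by
  simp only [ip, mul_comm]

lemma ip_vecMulVec_self {n : ℕ} (v : Fin n → ℝ) (X : Matrix (Fin n) (Fin n) ℝ) :
    ip (vecMulVec v v) X = quadForm X v := by
  simp only [ip, quadForm, dotProduct, mulVec, vecMulVec_apply, Finset.mul_sum]
  exact Finset.sum_congr rfl fun i _ => Finset.sum_congr rfl fun j _ => by ring

lemma quadForm_sub {n : ℕ} (Q Q' : Matrix (Fin n) (Fin n) ℝ) (x : Fin n → ℝ) :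
    quadForm (Q - Q') x = quadForm Q x - quadForm Q' x := by
  simp [quadForm, sub_mulVec, dotProduct_sub]

lemma bigMat_eq_fromBlocks {n : ℕ} (x u : Fin n → ℝ) (X U R : Matrix (Fin n) (Fin n) ℝ) :
    bigMat x u X U R = fromBlocks 1 (replicateRow Unit (Sum.elim x u))
      (replicateRow Unit (Sum.elim x u))ᴴ (fromBlocks X R Rᵀ U) := by
  ext (_ | i) (_ | j) <;> simp [bigMat]

lemma R2Feasible.mem_simplexF {n ρ : ℕ} {x u : Fin n → ℝ} {X U R : Matrix (Fin n) (Fin n) ℝ}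
    (h : R2Feasible ρ x u X U R) : x ∈ simplexF n :=
  ⟨h.2.2.1, h.2.2.2.2.2.1⟩

lemma R2Feasible.posSemidef_sub_vecMulVec {n ρ : ℕ} {x u : Fin n → ℝ}
    {X U R : Matrix (Fin n) (Fin n) ℝ} (h : R2Feasible ρ x u X U R) :
    (X - vecMulVec x x).PosSemidef := by
  have hpsd := h.2.2.2.2.2.2.2
  have : Invertible (1 : Matrix Unit Unit ℝ) := invertibleOne
  rw [bigMat_eq_fromBlocks, PosDef.fromBlocks₁₁ _ _ PosDef.one, inv_one, Matrix.mul_one] at hpsd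
  have hblock : (fromBlocks X R Rᵀ U - (replicateRow Unit (Sum.elim x u))ᴴ *
      replicateRow Unit (Sum.elim x u)).submatrix Sum.inl Sum.inl = X - vecMulVec x x := by
    ext i j
    simp [Matrix.mul_apply, vecMulVec_apply]
  exact hblock ▸ hpsd.submatrix Sum.inl

lemma R2Feasible.sq_dotProduct_le_ip {n ρ : ℕ} {x u : Fin n → ℝ}
    {X U R : Matrix (Fin n) (Fin n) ℝ} (h : R2Feasible ρ x u X U R) (v : Fin n → ℝ) :
    (v ⬝ᵥ x) ^ 2 ≤ ip (vecMulVec v v) X := by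
  have hv := h.posSemidef_sub_vecMulVec.dotProduct_mulVec_nonneg v
  rw [star_trivial, ← quadForm, quadForm_sub, quadForm_vecMulVec_self, dotProduct_comm] at hv
  rw [ip_vecMulVec_self]
  linarith

lemma exists_le_le_one_sum_eq {n ρ : ℕ} {x : Fin n → ℝ} (hx : x ∈ simplexF n)
    (hρ1 : 1 ≤ ρ) (hρn : ρ ≤ n) :
    ∃ u : Fin n → ℝ, (∀ i, x i ≤ u i) ∧ (∀ i, u i ≤ 1) ∧ ∑ i, u i = ρ := by
  -- For `n = 1` this is `0 / 0 = 0`, which is right since then `ρ = 1`.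
  set t : ℝ := (ρ - 1) / (n - 1)
  have ht0 : 0 ≤ t := div_nonneg (by simp [hρ1]) (by simp; omega)
  have ht1 : t ≤ 1 := div_le_one_of_le₀ (by simp [hρn]) (by simp; omega)
  refine ⟨fun i => x i + t * (1 - x i), fun i => ?_, fun i => ?_, ?_⟩
  · nlinarith [le_one_of_mem_simplexF hx i]
  · nlinarith [le_one_of_mem_simplexF hx i]
  · simp only [Finset.sum_add_distrib, ← Finset.mul_sum, Finset.sum_sub_distrib, hx.1]
    rcases eq_or_lt_of_le (hρ1.trans hρn) with hn | hn
    · subst hn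
      simp [show ρ = 1 by omega]
    · simp only [Finset.sum_const, Finset.card_univ, Fintype.card_fin, nsmul_eq_mul, mul_one, t]
      have : (n : ℝ) - 1 ≠ 0 := by
        have : (1 : ℝ) < n := by exact_mod_cast hn
        linarith
      field_simp
      ring

lemma bigMat_vecMulVec_add_diagonal {n : ℕ} (x u d : Fin n → ℝ) :
    bigMat x u (vecMulVec x x) (vecMulVec u u + diagonal d) (vecMulVec x u) =
      vecMulVec (Sum.elim 1 (Sum.elim x u)) (Sum.elim 1 (Sum.elim x u)) +
        diagonal (Sum.elim 0 (Sum.elim 0 d)) := by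
  ext (_ | i | i) (_ | j | j) <;> simp [bigMat, vecMulVec_apply, diagonal_apply, mul_comm]

lemma r2Feasible_vecMulVec_of_le_one {n ρ : ℕ} {x u : Fin n → ℝ} (hx : x ∈ simplexF n)
    (hxu : ∀ i, x i ≤ u i) (hu1 : ∀ i, u i ≤ 1) (hu : ∑ i, u i = ρ) :
    R2Feasible ρ x u (vecMulVec x x) (vecMulVec u u + diagonal fun i => u i * (1 - u i))
      (vecMulVec x u) := by
  have hd : 0 ≤ Sum.elim (0 : Unit → ℝ) (Sum.elim (0 : Fin n → ℝ) fun i => u i * (1 - u i)) := by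
    rintro (_ | i | i)
    · exact le_rfl
    · exact le_rfl
    · exact mul_nonneg ((hx.2 i).trans (hxu i)) (sub_nonneg.2 (hu1 i))
  refine ⟨transpose_vecMulVec x x, IsSymm.add (transpose_vecMulVec u u) (isDiag_diagonal _).isSymm,
    hx.1, hu, fun i => by simp [vecMulVec_apply]; ring, hx.2, hxu, ?_⟩
  rw [bigMat_vecMulVec_add_diagonal]
  exact (posSemidef_vecMulVec_self_star _).add (PosSemidef.diagonal hd)

lemma vecMulVec_mem_FR2proj {n ρ : ℕ} {x : Fin n → ℝ} (hx : x ∈ simplexF n)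
    (hρ1 : 1 ≤ ρ) (hρn : ρ ≤ n) : (x, vecMulVec x x) ∈ FR2proj n ρ := by
  obtain ⟨u, hxu, hu1, hu⟩ := exists_le_le_one_sum_eq hx hρ1 hρn
  exact ⟨u, _, _, r2Feasible_vecMulVec_of_le_one hx hxu hu1 hu⟩

lemma bddBelow_quadForm_vecMulVec_self {n : ℕ} (v : Fin n → ℝ) (s : Set (Fin n → ℝ)) :
    BddBelow (quadForm (vecMulVec v v) '' s) :=
  ⟨0, by rintro _ ⟨x, -, rfl⟩; rw [quadForm_vecMulVec_self]; positivity⟩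

theorem ellR2_vecMulVec_self {n ρ : ℕ} (v : Fin n → ℝ) (hρ1 : 1 ≤ ρ) (hρn : ρ ≤ n) :
    ellR2 (vecMulVec v v) ρ = ell (vecMulVec v v) := by
  rw [ell, Monotone.map_csInf_of_continuousAt continuous_coe_real_ereal.continuousAt
    EReal.coe_strictMono.monotone ((simplexF_nonempty (by omega)).image _)
    (bddBelow_quadForm_vecMulVec_self v _), ellR2, Set.image_image]
  apply csInf_eq_csInf_of_forall_exists_le
  · rintro _ ⟨⟨x, X⟩, ⟨u, U, R, h⟩, rfl⟩
    refine ⟨_, ⟨x, h.mem_simplexF, rfl⟩, ?_⟩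
    exact EReal.coe_le_coe_iff.2 (quadForm_vecMulVec_self v x ▸ h.sq_dotProduct_le_ip v)
  · rintro _ ⟨x, hx, rfl⟩
    refine ⟨_, ⟨_, vecMulVec_mem_FR2proj hx hρ1 hρn, rfl⟩, le_of_eq ?_⟩
    simp only [ip_comm _ (vecMulVec x x), ip_vecMulVec_self]

lemma sparseF_one_eq_range (n : ℕ) : sparseF n 1 = Set.range fun i : Fin n => Pi.single i 1 := by
  refine Set.Subset.antisymm ?_ (Set.range_subset_iff.2 single_mem_sparseF_one)
  rintro x ⟨⟨hsum, -⟩, hsp⟩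
  obtain ⟨i, -, hi⟩ := Finset.exists_ne_zero_of_sum_ne_zero (hsum.trans_ne one_ne_zero)
  have hzero : ∀ j, j ≠ i → x j = 0 := fun j hj =>
    not_not.1 fun h => hj ((Set.ncard_le_one_iff).1 hsp h hi)
  have hxi : x i = 1 := by rwa [Fintype.sum_eq_single i hzero] at hsum
  refine ⟨i, funext fun j => ?_⟩
  rcases eq_or_ne j i with rfl | hj
  · simp [hxi]
  · simp [hzero j hj, Pi.single_eq_of_ne hj]

lemma segment_single_mem_sparseF_two {n : ℕ} (i j : Fin n) {t : ℝ} (ht0 : 0 ≤ t) (ht1 : t ≤ 1) :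
    (1 - t) • Pi.single i 1 + t • Pi.single j 1 ∈ sparseF n 2 := by
  refine ⟨⟨by simp [Finset.sum_add_distrib, ← Finset.mul_sum], fun k => ?_⟩, ?_⟩
  · simp only [Pi.add_apply, Pi.smul_apply, smul_eq_mul, Pi.single_apply]
    split_ifs <;> linarith
  · refine (Set.ncard_le_ncard (t := {i, j}) fun k hk => ?_).trans (Set.ncard_insert_le _ _)
    |>.trans (by simp)
    by_contra h
    simp only [Set.mem_insert_iff, Set.mem_singleton_iff, not_or] at h
    simp [Pi.single_eq_of_ne h.1, Pi.single_eq_of_ne h.2] at hk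

lemma exists_mem_sparseF_two_dotProduct_eq {n : ℕ} (v : Fin n → ℝ) {i j : Fin n} {c : ℝ}
    (hi : v i ≤ c) (hj : c ≤ v j) : ∃ y ∈ sparseF n 2, v ⬝ᵥ y = c := by
  set t := (c - v i) / (v j - v i)
  refine ⟨_, segment_single_mem_sparseF_two i j (t := t) (div_nonneg (by linarith) (by linarith))
    (div_le_one_of_le₀ (by linarith) (by linarith)), ?_⟩
  have ht : t * (v j - v i) = c - v i := div_mul_cancel_of_imp fun h => by linarith
  simp only [dotProduct_add, dotProduct_smul, dotProduct_single, smul_eq_mul, mul_one]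
  linear_combination ht

lemma exists_le_dotProduct_le {n : ℕ} {x : Fin n → ℝ} (hx : x ∈ simplexF n) (v : Fin n → ℝ) :
    ∃ i j, v i ≤ v ⬝ᵥ x ∧ v ⬝ᵥ x ≤ v j := by
  have hne : (Finset.univ : Finset (Fin n)).Nonempty :=
    Finset.nonempty_of_sum_ne_zero (hx.1.trans_ne one_ne_zero)
  obtain ⟨i, -, hi⟩ := Finset.exists_min_image _ v hne
  obtain ⟨j, -, hj⟩ := Finset.exists_max_image _ v hne
  refine ⟨i, j, ?_, ?_⟩
  · calc v i = ∑ k, v i * x k := by rw [← Finset.mul_sum, hx.1, mul_one]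
      _ ≤ v ⬝ᵥ x := Finset.sum_le_sum fun k _ =>
        mul_le_mul_of_nonneg_right (hi k (Finset.mem_univ k)) (hx.2 k)
  · calc v ⬝ᵥ x ≤ ∑ k, v j * x k := Finset.sum_le_sum fun k _ =>
        mul_le_mul_of_nonneg_right (hj k (Finset.mem_univ k)) (hx.2 k)
      _ = v j := by rw [← Finset.mul_sum, hx.1, mul_one]

lemma ellSparse_eq_ell_of_forall_exists_le {n ρ : ℕ} (Q : Matrix (Fin n) (Fin n) ℝ)
    (h : ∀ x ∈ simplexF n, ∃ y ∈ sparseF n ρ, quadForm Q y ≤ quadForm Q x) :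
    ellSparse Q ρ = ell Q := by
  refine csInf_eq_csInf_of_forall_exists_le ?_ ?_
  · rintro _ ⟨y, hy, rfl⟩
    exact ⟨_, ⟨y, hy.1, rfl⟩, le_rfl⟩
  · rintro _ ⟨x, hx, rfl⟩
    obtain ⟨y, hy, hle⟩ := h x hx
    exact ⟨_, ⟨y, hy, rfl⟩, hle⟩

theorem ellSparse_vecMulVec_self_of_two_le {n ρ : ℕ} (v : Fin n → ℝ) (hρ : 2 ≤ ρ) :
    ellSparse (vecMulVec v v) ρ = ell (vecMulVec v v) := by
  refine ellSparse_eq_ell_of_forall_exists_le _ fun x hx => ?_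
  obtain ⟨i, j, hi, hj⟩ := exists_le_dotProduct_le hx v
  obtain ⟨y, hy, hvy⟩ := exists_mem_sparseF_two_dotProduct_eq v hi hj
  exact ⟨y, sparseF_mono hρ hy, by simp only [quadForm_vecMulVec_self, hvy, le_rfl]⟩

theorem ellSparse_one_vecMulVec_self_of_sign {n : ℕ} (v : Fin n → ℝ)
    (hv : (∀ i, 0 ≤ v i) ∨ (∀ i, 0 ≤ -v i) ∨ (∃ i, v i = 0)) :
    ellSparse (vecMulVec v v) 1 = ell (vecMulVec v v) := by
  refine ellSparse_eq_ell_of_forall_exists_le _ fun x hx => ?_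
  suffices ∃ k, v k ^ 2 ≤ (v ⬝ᵥ x) ^ 2 by
    obtain ⟨k, hk⟩ := this
    exact ⟨_, single_mem_sparseF_one k, by simpa [quadForm_vecMulVec_self] using hk⟩
  obtain ⟨i, j, hi, hj⟩ := exists_le_dotProduct_le hx v
  rcases hv with hpos | hneg | ⟨k, hk⟩
  · exact ⟨i, pow_le_pow_left₀ (hpos i) hi 2⟩
  · exact ⟨j, by nlinarith [hneg j]⟩
  · exact ⟨k, by simp [hk, sq_nonneg]⟩

theorem ell_lt_ellSparse_one_vecMulVec_self {n : ℕ} (v : Fin n → ℝ) {i j : Fin n}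
    (hi : v i < 0) (hj : 0 < v j) (hv : ∀ k, v k ≠ 0) :
    ell (vecMulVec v v) < ellSparse (vecMulVec v v) 1 := by
  have : Nonempty (Fin n) := ⟨i⟩
  obtain ⟨y, hy, hvy⟩ := exists_mem_sparseF_two_dotProduct_eq v hi.le hj.le
  have hell : ell (vecMulVec v v) ≤ 0 :=
    csInf_le_of_le (bddBelow_quadForm_vecMulVec_self v _) ⟨y, hy.1, rfl⟩
      (by rw [quadForm_vecMulVec_self, hvy, sq, mul_zero])
  have hsparse : ellSparse (vecMulVec v v) 1 = ⨅ k, v k ^ 2 := by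
    rw [ellSparse, sparseF_one_eq_range, ← Set.range_comp]
    simp [Function.comp_def, quadForm_vecMulVec_self, iInf]
  obtain ⟨k, hk⟩ := exists_eq_ciInf_of_finite (f := fun k => v k ^ 2)
  rw [hsparse, ← hk]
  exact hell.trans_lt (by have := hv k; positivity)

theorem stmt10_general {n : ℕ} (v : Fin n → ℝ) :
    (((∀ i, 0 ≤ v i) ∨ (∀ i, 0 ≤ -v i) ∨ (∃ i, v i = 0)) →
      ∀ ρ : ℕ, 1 ≤ ρ → ρ ≤ n →
        ellR2 (Matrix.vecMulVec v v) ρ = (ellSparse (Matrix.vecMulVec v v) ρ : EReal)) ∧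
    (¬((∀ i, 0 ≤ v i) ∨ (∀ i, 0 ≤ -v i) ∨ (∃ i, v i = 0)) →
      ellR2 (Matrix.vecMulVec v v) 1 < (ellSparse (Matrix.vecMulVec v v) 1 : EReal) ∧
      ∀ ρ : ℕ, 2 ≤ ρ → ρ ≤ n →
        ellR2 (Matrix.vecMulVec v v) ρ = (ellSparse (Matrix.vecMulVec v v) ρ : EReal)) := by
  refine ⟨fun hv ρ hρ1 hρn => ?_, fun hv => ⟨?_, fun ρ hρ2 hρn => ?_⟩⟩
  · rw [ellR2_vecMulVec_self v hρ1 hρn]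
    rcases eq_or_lt_of_le hρ1 with rfl | hρ2
    · rw [ellSparse_one_vecMulVec_self_of_sign v hv]
    · rw [ellSparse_vecMulVec_self_of_two_le v hρ2]
  · push Not at hv
    obtain ⟨⟨i, hi⟩, ⟨j, hj⟩, hv0⟩ := hv
    rw [ellR2_vecMulVec_self v le_rfl i.pos]
    exact EReal.coe_lt_coe_iff.2 (ell_lt_ellSparse_one_vecMulVec_self v hi (neg_lt_zero.1 hj) hv0)
  · rw [ellR2_vecMulVec_self v (by omega) hρn, ellSparse_vecMulVec_self_of_two_le v hρ2]

theorem stmt10 {n : ℕ} (hn : 0 < n) (v : Fin n → ℝ) :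
    (((∀ i, 0 ≤ v i) ∨ (∀ i, 0 ≤ -v i) ∨ (∃ i, v i = 0)) →
      ∀ ρ : ℕ, 1 ≤ ρ → ρ ≤ n →
        ellR2 (Matrix.vecMulVec v v) ρ = (ellSparse (Matrix.vecMulVec v v) ρ : EReal)) ∧
    (¬((∀ i, 0 ≤ v i) ∨ (∀ i, 0 ≤ -v i) ∨ (∃ i, v i = 0)) →
      ellR2 (Matrix.vecMulVec v v) 1 < (ellSparse (Matrix.vecMulVec v v) 1 : EReal) ∧
      ∀ ρ : ℕ, 2 ≤ ρ → ρ ≤ n →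
        ellR2 (Matrix.vecMulVec v v) ρ = (ellSparse (Matrix.vecMulVec v v) ρ : EReal)) :=
  stmt10_general v

end
end

section
/- For every ρ ∈ {2,…,n}, {(x,X) ∈ F^{R3} : ‖x‖₀ ≤ ρ} ⊆ F^{R3}_ρ, i.e., every SDP-RLT-feasible pair of the unconstrained StQP whose x-part is ρ-sparse is retained by the projected SDP-RLT feasible set of the sparse StQP. -/
/-! Pad the support of `x` to a set `S` of exactly `ρ` indices and lift `(x, X)` by `u = 1_S`,
`U = u uᵀ`, `R = x uᵀ`. The linear constraints then reduce, index by index, to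
`max 0 (x i + x j - 1) ≤ X i j ≤ min (x i) (x j)`, which every point of `FR1 n` satisfies, and the
moment matrix is the Gram matrix of `(1, x, u)` plus `X - x xᵀ` placed in the `X`-block. -/

open Matrix BigOperators

noncomputable section

def R3Feasible {n : ℕ} (ρ : ℕ) (x u : Fin n → ℝ)
    (X U R : Matrix (Fin n) (Fin n) ℝ) : Prop :=
  R1Feasible ρ x u X U R ∧ (bigMat x u X U R).PosSemidef

def FR3proj (n ρ : ℕ) : Set ((Fin n → ℝ) × Matrix (Fin n) (Fin n) ℝ) :=
  {p | ∃ u U R, R3Feasible ρ p.1 u p.2 U R}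

def FR3 (n : ℕ) : Set ((Fin n → ℝ) × Matrix (Fin n) (Fin n) ℝ) :=
  {p | p.2.IsSymm ∧ (∑ i, p.1 i) = 1 ∧ (∀ i, (∑ j, p.2 i j) = p.1 i) ∧
    (∀ i, 0 ≤ p.1 i) ∧ (∀ i j, 0 ≤ p.2 i j) ∧
    (p.2 - Matrix.vecMulVec p.1 p.1).PosSemidef}

theorem Matrix.PosSemidef.fromBlocks_zero {m l R : Type*} [Fintype m] [Fintype l] [CommRing R]
    [PartialOrder R] [StarRing R] [StarOrderedRing R] {A : Matrix m m R} {D : Matrix l l R}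
    (hA : A.PosSemidef) (hD : D.PosSemidef) : (fromBlocks A 0 0 D).PosSemidef := by
  refine .of_dotProduct_mulVec_nonneg (hA.isHermitian.fromBlocks (by simp) hD.isHermitian)
    fun v => ?_
  rw [← Sum.elim_comp_inl_inr v, fromBlocks_mulVec]
  simp only [Matrix.zero_mulVec, add_zero, zero_add, Function.star_sumElim,
    sumElim_dotProduct_sumElim]
  exact add_nonneg (hA.dotProduct_mulVec_nonneg (v ∘ Sum.inl))
    (hD.dotProduct_mulVec_nonneg (v ∘ Sum.inr))

theorem bigMat_vecMulVec {n : ℕ} (x u : Fin n → ℝ) (X : Matrix (Fin n) (Fin n) ℝ) :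
    bigMat x u X (vecMulVec u u) (vecMulVec x u) =
      vecMulVec (Sum.elim 1 (Sum.elim x u)) (Sum.elim 1 (Sum.elim x u)) +
        fromBlocks 0 0 0 (fromBlocks (X - vecMulVec x x) 0 0 0) := by
  ext (_ | i | i) (_ | j | j) <;> simp [bigMat, vecMulVec_apply]

theorem posSemidef_bigMat_vecMulVec {n : ℕ} {x : Fin n → ℝ} {X : Matrix (Fin n) (Fin n) ℝ}
    (hX : (X - vecMulVec x x).PosSemidef) (u : Fin n → ℝ) :
    (bigMat x u X (vecMulVec u u) (vecMulVec x u)).PosSemidef := by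
  have hrankOne :=
    posSemidef_vecMulVec_self_star (Sum.elim 1 (Sum.elim x u) : Unit ⊕ (Fin n ⊕ Fin n) → ℝ)
  rw [star_trivial] at hrankOne
  rw [bigMat_vecMulVec]
  exact hrankOne.add (.fromBlocks_zero .zero (.fromBlocks_zero hX .zero))

section FR1

variable {n : ℕ} {x : Fin n → ℝ} {X : Matrix (Fin n) (Fin n) ℝ}

theorem mem_FR1 : (x, X) ∈ FR1 n ↔ X.IsSymm ∧ ∑ i, x i = 1 ∧ (∀ i, ∑ j, X i j = x i) ∧
    (∀ i, 0 ≤ x i) ∧ ∀ i j, 0 ≤ X i j :=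
  Iff.rfl

theorem le_one_of_mem_FR1 (h : (x, X) ∈ FR1 n) (i : Fin n) : x i ≤ 1 := by
  obtain ⟨-, hsum, -, hx, -⟩ := mem_FR1.1 h
  exact hsum ▸ Finset.single_le_sum (fun j _ => hx j) (Finset.mem_univ i)

theorem entry_le_left_of_mem_FR1 (h : (x, X) ∈ FR1 n) (i j : Fin n) : X i j ≤ x i := by
  obtain ⟨-, -, hrow, -, hX⟩ := mem_FR1.1 h
  exact hrow i ▸ Finset.single_le_sum (fun k _ => hX i k) (Finset.mem_univ j)

theorem entry_le_right_of_mem_FR1 (h : (x, X) ∈ FR1 n) (i j : Fin n) : X i j ≤ x j :=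
  (mem_FR1.1 h).1.apply i j ▸ entry_le_left_of_mem_FR1 h j i

theorem add_sub_one_le_entry_of_mem_FR1 (h : (x, X) ∈ FR1 n) (i j : Fin n) :
    x i + x j - 1 ≤ X i j := by
  obtain ⟨-, hsum, hrow, -, -⟩ := mem_FR1.1 h
  have hrest : ∑ k ∈ Finset.univ.erase j, X i k ≤ ∑ k ∈ Finset.univ.erase j, x k :=
    Finset.sum_le_sum fun k _ => entry_le_right_of_mem_FR1 h i k
  have hsplit_row := Finset.add_sum_erase _ (X i) (Finset.mem_univ j)
  have hsplit_sum := Finset.add_sum_erase _ x (Finset.mem_univ j)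
  rw [hrow i] at hsplit_row
  rw [hsum] at hsplit_sum
  linarith

theorem r1Feasible_indicator (h : (x, X) ∈ FR1 n) {S : Finset (Fin n)}
    (hxS : ∀ i ∉ S, x i = 0) {ρ : ℕ} (hS : S.card = ρ) :
    R1Feasible ρ x ((S : Set (Fin n)).indicator 1) X
      (vecMulVec ((S : Set (Fin n)).indicator 1) ((S : Set (Fin n)).indicator 1))
      (vecMulVec x ((S : Set (Fin n)).indicator 1)) := by
  set u := (S : Set (Fin n)).indicator (1 : Fin n → ℝ)
  obtain ⟨hsym, hsum, hrow, hx, hX⟩ := mem_FR1.1 h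
  have hu : ∀ i, u i = 1 ∨ (u i = 0 ∧ x i = 0) := fun i => by
    by_cases hi : i ∈ S
    · simp [u, hi]
    · simp [u, hi, hxS i hi]
  have husum : ∑ i, u i = ρ := by simp [u, Set.indicator_apply, hS]
  have hu_nonneg : ∀ i, 0 ≤ u i := Set.indicator_nonneg fun _ _ => zero_le_one
  have hxu : ∀ i, x i ≤ u i := fun i => by
    rcases hu i with h1 | ⟨h0, hx0⟩
    · exact h1 ▸ le_one_of_mem_FR1 h i
    · rw [h0, hx0]
  have hXrow : ∀ i j, x i = 0 → X i j = 0 := fun i j hx0 =>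
    le_antisymm (hx0 ▸ entry_le_left_of_mem_FR1 h i j) (hX i j)
  refine ⟨hsym, transpose_vecMulVec u u, hsum, husum, hxu, hx, ?_, hrow, ?_, ?_, ?_, ?_, ?_,
    ?_, hX, ?_, ?_⟩
  · intro i
    rcases hu i with hi | ⟨hi, -⟩ <;> simp [vecMulVec_apply, hi]
  · intro j
    simp only [vecMulVec_apply, ← Finset.sum_mul, hsum, one_mul]
  · intro i
    simp only [vecMulVec_apply, ← Finset.mul_sum, husum, mul_comm]
  · intro i
    simp only [vecMulVec_apply, ← Finset.mul_sum, husum, mul_comm]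
  · intro i j
    simp only [vecMulVec_apply]
    rcases hu i with hi | hi
    · rcases hu j with hj | hj
      · rw [hi, hj]
        linarith [add_sub_one_le_entry_of_mem_FR1 h i j]
      · rw [hj.1, hj.2]
        linarith [hX i j]
    · rw [hi.1, hi.2, hXrow i j hi.2]
      simp
  · intro i j
    simp only [vecMulVec_apply]
    rcases hu i with hi | hi
    · rw [hi, mul_one]
      linarith [entry_le_right_of_mem_FR1 h i j]
    · rw [hi.1, hXrow i j hi.2]
      simp
  · exact fun i j => sub_nonpos.2 (mul_le_mul_of_nonneg_right (hxu i) (hu_nonneg j))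
  · exact fun i j => mul_nonneg (hx i) (hu_nonneg j)
  · exact fun i j => mul_nonneg (hu_nonneg i) (hu_nonneg j)

end FR1

theorem sparsity_eq_card_filter {n : ℕ} (x : Fin n → ℝ) :
    sparsity x = (Finset.univ.filter fun i => x i ≠ 0).card := by
  rw [sparsity, ← Set.ncard_coe_finset, Finset.coe_filter_univ]

theorem exists_finset_card_eq_of_sparsity_le {n ρ : ℕ} {x : Fin n → ℝ} (hx : sparsity x ≤ ρ)
    (hρ : ρ ≤ n) : ∃ S : Finset (Fin n), (∀ i ∉ S, x i = 0) ∧ S.card = ρ := by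
  rw [sparsity_eq_card_filter] at hx
  obtain ⟨S, hsupp, hS⟩ := Finset.exists_superset_card_eq hx (by simpa using hρ)
  refine ⟨S, fun i hi => ?_, hS⟩
  by_contra hxi
  exact hi (hsupp (by simpa using hxi))

theorem stmt14_general {n : ℕ} (ρ : ℕ) (h2 : ρ ≤ n) :
    {p ∈ FR3 n | sparsity p.1 ≤ ρ} ⊆ FR3proj n ρ := by
  rintro ⟨x, X⟩ ⟨⟨hsym, hsum, hrow, hx, hX, hpsd⟩, hsp⟩
  obtain ⟨S, hxS, hS⟩ := exists_finset_card_eq_of_sparsity_le hsp h2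
  exact ⟨_, _, _, r1Feasible_indicator ⟨hsym, hsum, hrow, hx, hX⟩ hxS hS,
    posSemidef_bigMat_vecMulVec hpsd _⟩

theorem stmt14 {n : ℕ} (hn : 0 < n) (ρ : ℕ) (h1 : 2 ≤ ρ) (h2 : ρ ≤ n) :
    {p ∈ FR3 n | sparsity p.1 ≤ ρ} ⊆ FR3proj n ρ :=
  stmt14_general ρ h2

end
end
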